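/- For every prior 𝒟 there exists a signaling scheme Z₀, each of whose signals is either a singleton signal or an equal-revenue binary signal, such that for every signaling scheme Z' and every m ∈ (0,1], 4·PFV(s_{Z₀}, m) ≥ PFV(s_{Z'}, m), where PFV(g, m) = ∫₀^m g(x)dx is the integration prefix sum of the surplus-mass function. -/

import Mathlib

/-!
Split the prior mass at each value in half: one half may serve as the low end of an
equal-revenue pair, the other as the high end. The values `i = 0, 1, …` in turn spend their
high half on the lowest low halves still available; a unit of low mass at `v t` bought by `v i`
gives value `v i` surplus `v t`, and whatever is left becomes singleton signals. After value `k`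
has bought there is a pointer `σ ≤ k`: the low halves below `σ` are used up, and every value in
`(σ, k]` spent all of its high half on values at most `σ`.

By optimality of its price against the price `v σ`, any signal leaves the values up to `k` at most
`∑_{j<σ} v_j f_j + ∑_{σ≤i≤k} (v_i - v_σ) f_i` of surplus, and the pointer bounds each of the two
sums by twice the surplus of the greedy scheme on the values up to `k`. This is the factor `4` at
the breakpoints `F(v_k)`; Abel summation carries it to every `m`.
-/

open Finset MeasureTheory

namespace PD

noncomputable section

/-- Complementary CDF of a mass function `fS` at value `v i`. -/
def G {n : ℕ} (v fS : Fin n → ℝ) (i : Fin n) : ℝ :=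
  ∑ j ∈ Finset.univ.filter (fun j => v i ≤ v j), fS j

/-- A signal is a probability mass function on the values. -/
def IsSignal {n : ℕ} (fS : Fin n → ℝ) : Prop :=
  (∀ i, 0 ≤ fS i) ∧ ∑ i, fS i = 1

/-- The index of the seller's price: the smallest index maximizing `v i * G i`. -/
def priceIdx {n : ℕ} [NeZero n] (v fS : Fin n → ℝ) : Fin n :=
  (Finset.univ.filter (fun i => ∀ j, v j * G v fS j ≤ v i * G v fS i)).min' (by
    haveI : Nonempty (Fin n) := ⟨⟨0, Nat.pos_of_ne_zero (NeZero.ne n)⟩⟩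
    obtain ⟨b, _, hb⟩ := Finset.exists_max_image (Finset.univ : Finset (Fin n))
      (fun i => v i * G v fS i) Finset.univ_nonempty
    exact ⟨b, Finset.mem_filter.mpr ⟨Finset.mem_univ _, fun j => hb j (Finset.mem_univ _)⟩⟩)

/-- Consumer surplus of value `v i` under signal `fS`. -/
def cs {n : ℕ} [NeZero n] (v fS : Fin n → ℝ) (i : Fin n) : ℝ :=
  if v (priceIdx v fS) ≤ v i then v i - v (priceIdx v fS) else 0

/-- Revenue of a signal: the maximum of `v i * G i`. -/
def revSig {n : ℕ} [NeZero n] (v fS : Fin n → ℝ) : ℝ :=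
  Finset.univ.sup' (by
    haveI : Nonempty (Fin n) := ⟨⟨0, Nat.pos_of_ne_zero (NeZero.ne n)⟩⟩
    exact Finset.univ_nonempty) (fun i => v i * G v fS i)

/-- A signaling scheme for prior mass function `f`. -/
structure Scheme (n : ℕ) (f : Fin n → ℝ) where
  Q : ℕ
  sig : Fin Q → Fin n → ℝ
  wt : Fin Q → ℝ
  sig_isSignal : ∀ q, IsSignal (sig q)
  wt_nonneg : ∀ q, 0 ≤ wt q
  wt_sum : ∑ q, wt q = 1
  bayes : ∀ i, ∑ q, wt q * sig q i = f i

/-- Expected consumer surplus of value `v i` under scheme `Z`. -/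
def csZ {n : ℕ} [NeZero n] (v f : Fin n → ℝ) (Z : Scheme n f) (i : Fin n) : ℝ :=
  ∑ q, cs v (Z.sig q) i * (Z.wt q * Z.sig q i / f i)

/-- Expected revenue of a scheme. -/
def revZ {n : ℕ} [NeZero n] (v : Fin n → ℝ) {f : Fin n → ℝ} (Z : Scheme n f) : ℝ :=
  ∑ q, Z.wt q * revSig v (Z.sig q)

/-- A scheme is efficient if on every positive-weight signal, the smallest value
in the support maximizes `v * G`. -/
def Efficient {n : ℕ} (v : Fin n → ℝ) {f : Fin n → ℝ} (Z : Scheme n f) : Prop :=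
  ∀ q, 0 < Z.wt q → ∀ i, (0 < Z.sig q i ∧ ∀ j, 0 < Z.sig q j → i ≤ j) →
    ∀ j, v j * G v (Z.sig q) j ≤ v i * G v (Z.sig q) i

/-- A scheme is monotone if higher values get (weakly) higher expected surplus. -/
def MonotoneScheme {n : ℕ} [NeZero n] (v f : Fin n → ℝ) (Z : Scheme n f) : Prop :=
  ∀ i j : Fin n, v i < v j → csZ v f Z i ≤ csZ v f Z j

/-- A scheme is buyer-optimal if the total expected consumer surplus equals the
expected value minus the Myerson revenue. -/
def BuyerOptimal {n : ℕ} [NeZero n] (v f : Fin n → ℝ) (Z : Scheme n f) : Prop :=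
  ∑ i, f i * csZ v f Z i = (∑ i, f i * v i) - revSig v f

/-- The surplus-mass step function of a scheme: equal to `csZ i` on the quantile
interval `(F(v_{i-1}), F(v_i)]`. -/
def smf {n : ℕ} [NeZero n] (v f : Fin n → ℝ) (Z : Scheme n f) (x : ℝ) : ℝ :=
  ∑ i, if (∑ j ∈ Finset.univ.filter (fun j => j < i), f j) < x ∧
          x ≤ ∑ j ∈ Finset.univ.filter (fun j => j ≤ i), f j
       then csZ v f Z i else 0

/-- Sorted `m`-prefix sum of `g` on `(0,1]`: the infimum of `∫_T g` over
(measurable) subsets `T` of `(0,1]` of total length `m`. -/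
def PF (g : ℝ → ℝ) (m : ℝ) : ℝ :=
  sInf { r : ℝ | ∃ T : Set ℝ, T ⊆ Set.Ioc 0 1 ∧ MeasurableSet T ∧
    volume T = ENNReal.ofReal m ∧ r = ∫ x in T, g x }

/-- Integration `m`-prefix sum of `g`: `∫₀^m g`. -/
def PFV (g : ℝ → ℝ) (m : ℝ) : ℝ := ∫ x in Set.Ioc (0:ℝ) m, g x

/-- A singleton signal puts all mass on one value. -/
def IsSingleton {n : ℕ} (fS : Fin n → ℝ) : Prop :=
  ∃ i : Fin n, fS = fun j => if j = i then 1 else 0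

/-- An equal-revenue binary signal on `v i < v j` puts mass `1 - v i / v j` on
`v i` and `v i / v j` on `v j`. -/
def IsEqRevBinary {n : ℕ} (v : Fin n → ℝ) (fS : Fin n → ℝ) : Prop :=
  ∃ i j : Fin n, v i < v j ∧
    fS = fun l => if l = i then 1 - v i / v j else if l = j then v i / v j else 0

/-- `i` is the smallest value in the support of `fS`. -/
def MinSupp {n : ℕ} (fS : Fin n → ℝ) (i : Fin n) : Prop :=
  0 < fS i ∧ ∀ j, 0 < fS j → i ≤ j

end

theorem sum_mul_le_mul_sum_of_antitone {ι : Type*} [LinearOrder ι] {θ x : ι → ℝ}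
    (hθ : Antitone θ) (s : Finset ι) (hx : ∀ k ∈ s, ∑ i ∈ s with i ≤ k, x i ≤ 0)
    {c : ℝ} (hc : ∀ i ∈ s, c ≤ θ i) :
    ∑ i ∈ s, θ i * x i ≤ c * ∑ i ∈ s, x i := by
  classical
  induction s using Finset.induction_on_max generalizing c with
  | empty => simp
  | insert a s has ih =>
    have ha : a ∉ s := fun h => (has a h).false
    have hs : ∀ k ∈ s, ∑ i ∈ s with i ≤ k, x i ≤ 0 := fun k hk => by
      simpa [filter_insert, not_le.mpr (has k hk)] using hx k (mem_insert_of_mem hk)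
    have htot : x a + ∑ i ∈ s, x i ≤ 0 := by
      simpa [filter_insert, ← sum_insert ha, filter_true_of_mem fun i hi => (has i hi).le]
        using hx a (mem_insert_self a s)
    have hθa := ih hs fun i hi => hθ (has i hi).le
    rw [sum_insert ha, sum_insert ha]
    nlinarith [hc a (mem_insert_self a s)]

section GreedyFill

variable {n : ℕ}

/-- `x` is the outcome of buying greedily, at unit costs `w`, from the stocks `r` at positions
`0, 1, …, K - 1` in this order with budget `c`. -/
structure IsGreedyFill (K : ℕ) (w r : Fin n → ℝ) (c : ℝ) (x : Fin n → ℝ) : Prop where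
  nonneg : ∀ t, 0 ≤ x t
  le : ∀ t, x t ≤ r t
  eq_zero_of_le : ∀ t : Fin n, K ≤ t.val → x t = 0
  cost_le : ∑ t, w t * x t ≤ c
  eq_of_cost_lt : ∑ t, w t * x t < c → ∀ t : Fin n, t.val < K → x t = r t
  eq_zero_of_lt : ∀ s t, s < t → x s < r s → x t = 0

lemma IsGreedyFill.cost_eq_of_lt {K : ℕ} {w r x : Fin n → ℝ} {c : ℝ}
    (hx : IsGreedyFill K w r c x) {s : Fin n} (hs : s.val < K) (hlt : x s < r s) :
    ∑ t, w t * x t = c :=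
  hx.cost_le.antisymm (not_lt.mp fun h => hlt.ne (hx.eq_of_cost_lt h s hs))

lemma IsGreedyFill.succ {K : ℕ} {w r x : Fin n → ℝ} {c : ℝ} (hx : IsGreedyFill K w r c x)
    (hr : ∀ t, 0 ≤ r t) (t₀ : Fin n) (ht₀ : t₀.val = K) (hw : 0 < w t₀) :
    IsGreedyFill (K + 1) w r c (x + Pi.single t₀ (min (r t₀) ((c - ∑ t, w t * x t) / w t₀))) := by
  set y := min (r t₀) ((c - ∑ t, w t * x t) / w t₀) with hy
  have hrem : 0 ≤ c - ∑ t, w t * x t := sub_nonneg.mpr hx.cost_le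
  have hy0 : 0 ≤ y := le_min (hr t₀) (div_nonneg hrem hw.le)
  have hxt₀ : x t₀ = 0 := hx.eq_zero_of_le t₀ ht₀.ge
  set x' : Fin n → ℝ := x + Pi.single t₀ y
  have hcost : ∑ t, w t * x' t = ∑ t, w t * x t + w t₀ * y := by
    simp [x', mul_add, sum_add_distrib, Pi.single_apply]
  have hwy : w t₀ * y ≤ c - ∑ t, w t * x t :=
    (mul_le_mul_of_nonneg_left (min_le_right _ _) hw.le).trans_eq (mul_div_cancel₀ _ hw.ne')
  have hval : ∀ t, t ≠ t₀ → x' t = x t := fun t ht => by simp [x', ht]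
  have hval₀ : x' t₀ = y := by simp [x', hxt₀]
  refine ⟨fun t => ?_, fun t => ?_, fun t ht => ?_, ?_, fun hlt t ht => ?_, fun s t hst hs => ?_⟩
  · rcases eq_or_ne t t₀ with rfl | h
    · rw [hval₀]; exact hy0
    · rw [hval t h]; exact hx.nonneg t
  · rcases eq_or_ne t t₀ with rfl | h
    · rw [hval₀]; exact min_le_left _ _
    · rw [hval t h]; exact hx.le t
  · rw [hval t (by rintro rfl; omega)]; exact hx.eq_zero_of_le t (by omega)
  · rw [hcost]; linarith
  · rw [hcost] at hlt
    have hyr : y = r t₀ := by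
      rcases min_choice (r t₀) ((c - ∑ t, w t * x t) / w t₀) with h | h
      · exact h
      · rw [hy, h, mul_div_cancel₀ _ hw.ne'] at hlt; linarith
    rcases eq_or_ne t t₀ with rfl | h
    · rw [hval₀, hyr]
    · rw [hval t h]
      exact hx.eq_of_cost_lt (by nlinarith) t (by have := Fin.val_ne_of_ne h; omega)
  · rcases eq_or_ne t t₀ with rfl | ht
    · rw [hval s hst.ne] at hs
      have hfull := hx.cost_eq_of_lt (by omega) hs
      rw [hval₀, hy, hfull, sub_self, zero_div, min_eq_right (hr _)]
    · rw [hval t ht]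
      rcases eq_or_ne s t₀ with rfl | hs₀
      · exact hx.eq_zero_of_le t (by omega)
      · rw [hval s hs₀] at hs
        exact hx.eq_zero_of_lt s t hst hs

lemma exists_isGreedyFill (w r : Fin n → ℝ) (c : ℝ) (hr : ∀ t, 0 ≤ r t) (hc : 0 ≤ c) (K : ℕ)
    (hw : ∀ t : Fin n, t.val < K → 0 < w t) : ∃ x, IsGreedyFill K w r c x := by
  induction K with
  | zero => exact ⟨0, fun _ => le_rfl, hr, fun _ _ => rfl, by simpa using hc,
      fun _ _ h => absurd h (Nat.not_lt_zero _), fun _ _ _ _ => rfl⟩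
  | succ K ih =>
    obtain ⟨x, hx⟩ := ih fun t ht => hw t (by omega)
    by_cases hK : K < n
    · exact ⟨_, hx.succ hr ⟨K, hK⟩ rfl (hw _ (by simp))⟩
    · exact ⟨x, hx.nonneg, hx.le, fun t _ => hx.eq_zero_of_le t (by omega), hx.cost_le,
        fun h t _ => hx.eq_of_cost_lt h t (by omega), hx.eq_zero_of_lt⟩

end GreedyFill

section Signals

variable {n : ℕ} {v : Fin n → ℝ}

lemma G_eq_sum_Ici (hv : StrictMono v) (fS : Fin n → ℝ) (i : Fin n) :
    G v fS i = ∑ j ∈ Ici i, fS j := by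
  simp only [G, hv.le_iff_le, filter_le_eq_Ici]

lemma isSignal_single (j : Fin n) : IsSignal (Pi.single j 1 : Fin n → ℝ) :=
  ⟨fun l => by rw [Pi.single_apply]; split_ifs <;> norm_num, by simp⟩

/-- The equal-revenue signal on `v t < v i`: every price in `[v t, v i]` earns `v t`. -/
noncomputable def eqRevSignal (v : Fin n → ℝ) (t i : Fin n) : Fin n → ℝ :=
  Pi.single t (1 - v t / v i) + Pi.single i (v t / v i)

lemma isSignal_eqRevSignal (hv : StrictMono v) (hvpos : ∀ i, 0 < v i) {t i : Fin n}
    (hti : t < i) : IsSignal (eqRevSignal v t i) := by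
  have hr : v t / v i < 1 := (div_lt_one (hvpos i)).mpr (hv hti)
  have hr0 : 0 < v t / v i := div_pos (hvpos t) (hvpos i)
  refine ⟨fun l => ?_, by simp [eqRevSignal, sum_add_distrib]⟩
  simp only [eqRevSignal, Pi.add_apply, Pi.single_apply]
  split_ifs <;> linarith

lemma isEqRevBinary_eqRevSignal (hv : StrictMono v) {t i : Fin n} (hti : t < i) :
    IsEqRevBinary v (eqRevSignal v t i) := by
  refine ⟨t, i, hv hti, funext fun l => ?_⟩
  simp only [eqRevSignal, Pi.add_apply, Pi.single_apply]
  split_ifs with h1 h2 <;> first | (subst_vars; exact absurd hti (lt_irrefl _)) | simp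

variable [NeZero n]

lemma revenue_le_priceIdx (v fS : Fin n → ℝ) (j : Fin n) :
    v j * G v fS j ≤ v (priceIdx v fS) * G v fS (priceIdx v fS) := by
  unfold priceIdx
  generalize_proofs hne
  exact (mem_filter.mp (min'_mem _ hne)).2 j

lemma priceIdx_le {fS : Fin n → ℝ} {l : Fin n} (hl : ∀ j, v j * G v fS j ≤ v l * G v fS l) :
    priceIdx v fS ≤ l :=
  min'_le _ _ (mem_filter.mpr ⟨mem_univ l, hl⟩)

lemma cs_eq_ite (hv : StrictMono v) (fS : Fin n → ℝ) (i : Fin n) :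
    cs v fS i = if priceIdx v fS ≤ i then v i - v (priceIdx v fS) else 0 := by
  simp only [cs, hv.le_iff_le]

lemma priceIdx_eq_of_support (hv : StrictMono v) {fS : Fin n → ℝ} {t : Fin n}
    (hsum : ∑ j, fS j = 1) (hsupp : ∀ j < t, fS j = 0) (hmax : ∀ j, v j * G v fS j ≤ v t) :
    priceIdx v fS = t := by
  have hG : ∀ l ≤ t, G v fS l = 1 := fun l hl => by
    rw [G_eq_sum_Ici hv, ← hsum]
    exact sum_subset (subset_univ _) fun j _ hj => hsupp j (by simp at hj; exact hj.trans_le hl)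
  have hmax' : ∀ j, v j * G v fS j ≤ v t * G v fS t := by simpa [hG t le_rfl] using hmax
  refine (priceIdx_le hmax').antisymm (not_lt.mp fun hlt => ?_)
  have := revenue_le_priceIdx v fS t
  rw [hG _ hlt.le, hG t le_rfl] at this
  linarith [hv hlt]

lemma priceIdx_single (hv : StrictMono v) (hvpos : ∀ i, 0 < v i) (j : Fin n) :
    priceIdx v (Pi.single j 1) = j := by
  refine priceIdx_eq_of_support hv (by simp) (fun l hl => by simp [hl.ne]) fun l => ?_
  rw [G_eq_sum_Ici hv, sum_pi_single']
  split_ifs with h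
  · simpa using hv.monotone (mem_Ici.mp h)
  · simpa using (hvpos j).le

lemma priceIdx_eqRevSignal (hv : StrictMono v) (hvpos : ∀ i, 0 < v i) {t i : Fin n}
    (hti : t < i) : priceIdx v (eqRevSignal v t i) = t := by
  refine priceIdx_eq_of_support hv (isSignal_eqRevSignal hv hvpos hti).2
    (fun l hl => by simp [eqRevSignal, hl.ne, (hl.trans hti).ne]) fun l => ?_
  have hvi := hvpos i
  rw [G_eq_sum_Ici hv]
  simp only [eqRevSignal, Pi.add_apply, sum_add_distrib, sum_pi_single', mem_Ici]
  split_ifs with h1 h2 h2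
  · linarith [hv.monotone h1]
  · exact absurd (h1.trans hti.le) h2
  · rw [zero_add]
    calc v l * (v t / v i) ≤ v i * (v t / v i) := by
          gcongr
          · exact div_nonneg (hvpos t).le hvi.le
          · exact hv.monotone h2
      _ = v t := by field_simp
  · simpa using (hvpos t).le

end Signals

section UpperBound

variable {n : ℕ} [NeZero n] {v f : Fin n → ℝ}

lemma f_mul_csZ (Z : Scheme n f) {i : Fin n} (hfi : f i ≠ 0) :
    f i * csZ v f Z i = ∑ q, Z.wt q * (cs v (Z.sig q) i * Z.sig q i) := by
  rw [csZ, mul_sum]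
  exact sum_congr rfl fun q _ => by field_simp

omit [NeZero n] in
lemma Scheme.sum_wt_mul_sum (Z : Scheme n f) (s : Finset (Fin n)) (g : Fin n → ℝ) :
    ∑ q, Z.wt q * ∑ i ∈ s, g i * Z.sig q i = ∑ i ∈ s, g i * f i := by
  simp_rw [mul_sum, ← Z.bayes, mul_sum]
  rw [sum_comm]
  exact sum_congr rfl fun i _ => sum_congr rfl fun q _ => by ring

lemma cs_le_sub (hv : StrictMono v) (fS : Fin n → ℝ) {σ i : Fin n} (hσ : σ ≤ priceIdx v fS)
    (hσi : σ ≤ i) : cs v fS i ≤ v i - v σ := by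
  rw [cs_eq_ite hv]
  split_ifs
  · linarith [hv.monotone hσ]
  · linarith [hv.monotone hσi]

lemma sum_Iic_cs_mul_le (hv : StrictMono v) (hvpos : ∀ i, 0 < v i) {fS : Fin n → ℝ}
    (hS : ∀ i, 0 ≤ fS i) {σ k : Fin n} (hσk : σ ≤ k) :
    ∑ i ∈ Iic k, cs v fS i * fS i
      ≤ ∑ j ∈ Iio σ, v j * fS j + ∑ i ∈ Icc σ k, (v i - v σ) * fS i := by
  set p := priceIdx v fS
  rcases le_or_gt σ p with hσp | hpσ
  · have hsub : ∑ i ∈ Icc σ k, cs v fS i * fS i = ∑ i ∈ Iic k, cs v fS i * fS i := by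
      refine sum_subset (Icc_subset_Iic_self) fun i hik hi => ?_
      have hiσ : i < σ := by simp_all
      rw [cs_eq_ite hv, if_neg (not_le.mpr (hiσ.trans_le hσp)), zero_mul]
    rw [← hsub]
    refine le_add_of_nonneg_of_le (sum_nonneg fun j _ => mul_nonneg (hvpos j).le (hS j))
      (sum_le_sum fun i hi => ?_)
    exact mul_le_mul_of_nonneg_right (cs_le_sub hv fS hσp (mem_Icc.mp hi).1) (hS i)
  · -- `σ` is a worse price than `p`; the revenue gap pays for the surplus between them
    have hopt := revenue_le_priceIdx v fS σ
    simp only [G_eq_sum_Ici hv, ← Fintype.sum_ite_mem (Ici _), mul_sum] at hopt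
    rw [← sub_nonneg, ← sum_sub_distrib] at hopt
    have hterm : ∀ i, (if i ∈ Iic k then cs v fS i * fS i else 0)
        + (v p * (if i ∈ Ici p then fS i else 0) - v σ * (if i ∈ Ici σ then fS i else 0))
        ≤ (if i ∈ Iio σ then v i * fS i else 0)
          + (if i ∈ Icc σ k then (v i - v σ) * fS i else 0) := fun i => by
      have := hv.monotone hpσ.le
      simp only [mem_Iic, mem_Ici, mem_Iio, mem_Icc, cs_eq_ite hv]
      split_ifs <;> first | omega | nlinarith [hS i, hvpos i]
    rw [← Fintype.sum_ite_mem (Iic k), ← Fintype.sum_ite_mem (Iio σ),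
      ← Fintype.sum_ite_mem (Icc σ k)]
    have := sum_le_sum fun i (_ : i ∈ univ) => hterm i
    rw [sum_add_distrib, sum_add_distrib] at this
    linarith

lemma sum_Iic_mul_csZ_le (hv : StrictMono v) (hvpos : ∀ i, 0 < v i) (hf : ∀ i, 0 < f i)
    (Z : Scheme n f) {σ k : Fin n} (hσk : σ ≤ k) :
    ∑ i ∈ Iic k, f i * csZ v f Z i
      ≤ ∑ j ∈ Iio σ, v j * f j + ∑ i ∈ Icc σ k, (v i - v σ) * f i := by
  calc ∑ i ∈ Iic k, f i * csZ v f Z i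
      = ∑ q, Z.wt q * ∑ i ∈ Iic k, cs v (Z.sig q) i * Z.sig q i := by
        simp_rw [f_mul_csZ Z (hf _).ne', mul_sum]
        exact sum_comm
    _ ≤ ∑ q, Z.wt q * (∑ j ∈ Iio σ, v j * Z.sig q j
          + ∑ i ∈ Icc σ k, (v i - v σ) * Z.sig q i) :=
        sum_le_sum fun q _ => mul_le_mul_of_nonneg_left
          (sum_Iic_cs_mul_le hv hvpos (Z.sig_isSignal q).1 hσk) (Z.wt_nonneg q)
    _ = _ := by simp_rw [mul_add, sum_add_distrib, Z.sum_wt_mul_sum]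

end UpperBound

section GreedyMatching

variable {n : ℕ} {v f : Fin n → ℝ} {b : Fin n → Fin n → ℝ}

/-- The mass at `v i` that an equal-revenue signal on `v t < v i` carries per unit of mass at
`v t`. -/
noncomputable def partnerRatio (v : Fin n → ℝ) (i t : Fin n) : ℝ := v t / (v i - v t)

lemma partnerRatio_pos (hv : StrictMono v) (hvpos : ∀ i, 0 < v i) {t i : Fin n} (hti : t < i) :
    0 < partnerRatio v i t :=
  div_pos (hvpos t) (sub_pos.mpr (hv hti))

lemma sub_mul_partnerRatio_le (hv : StrictMono v) (hvpos : ∀ i, 0 < v i) {t σ i : Fin n}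
    (htσ : t ≤ σ) (hσi : σ < i) : (v i - v σ) * partnerRatio v i t ≤ v t := by
  have hd : 0 < v i - v t := sub_pos.mpr (hv (htσ.trans_lt hσi))
  calc (v i - v σ) * partnerRatio v i t ≤ (v i - v t) * partnerRatio v i t := by
        gcongr
        · exact (partnerRatio_pos hv hvpos (htσ.trans_lt hσi)).le
        · exact hv.monotone htσ
    _ = v t := by rw [partnerRatio]; field_simp

/-- What the values below `i` have left of the low half of the prior mass at `t`. -/
noncomputable def lowStock (f : Fin n → ℝ) (b : Fin n → Fin n → ℝ) (i t : Fin n) : ℝ :=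
  f t / 2 - ∑ i' ∈ Iio i, b t i'

/-- `b t i` is the mass at `v t` paired with `v i`: the values `i = 0, 1, …` in turn spend half of
their own mass buying, greedily from the bottom, mass below them. -/
def IsGreedyMatching (v f : Fin n → ℝ) (b : Fin n → Fin n → ℝ) : Prop :=
  ∀ i, IsGreedyFill i.val (partnerRatio v i) (lowStock f b i) (f i / 2) (fun t => b t i)

lemma exists_isGreedyMatching_prefix (hv : StrictMono v) (hvpos : ∀ i, 0 < v i)
    (hf : ∀ i, 0 ≤ f i) (K : ℕ) :
    ∃ b : Fin n → Fin n → ℝ, (∀ t i, K ≤ i.val → b t i = 0) ∧ (∀ t, ∑ i, b t i ≤ f t / 2) ∧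
      ∀ i : Fin n, i.val < K →
        IsGreedyFill i.val (partnerRatio v i) (lowStock f b i) (f i / 2) (fun t => b t i) := by
  induction K with
  | zero => exact ⟨0, fun _ _ _ => rfl, fun t => by simpa using div_nonneg (hf t) zero_le_two,
      fun _ h => absurd h (Nat.not_lt_zero _)⟩
  | succ K ih =>
    obtain ⟨b, hzero, hsum, hfill⟩ := ih
    by_cases hK : K < n
    swap
    · exact ⟨b, fun t i _ => hzero t i (by omega), hsum, fun i _ => hfill i (by omega)⟩
    set i₀ : Fin n := ⟨K, hK⟩
    have hstock : ∀ t, lowStock f b i₀ t = f t / 2 - ∑ i, b t i := fun t => by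
      rw [lowStock, sum_subset (subset_univ _) fun i _ hi => hzero t i ?_]
      simpa [i₀, Fin.lt_def] using hi
    obtain ⟨x, hx⟩ := exists_isGreedyFill (partnerRatio v i₀) (lowStock f b i₀) (f i₀ / 2)
      (fun t => by linarith [hstock t, hsum t]) (by linarith [hf i₀]) K
      fun t ht => partnerRatio_pos hv hvpos (Fin.lt_def.mpr ht)
    set b' : Fin n → Fin n → ℝ := fun t i => b t i + (Pi.single i₀ (x t) : Fin n → ℝ) i
      with hb'
    refine ⟨b', fun t i hi => ?_, fun t => ?_, fun i hi => ?_⟩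
    · have : i ≠ i₀ := fun h => by simp [h, i₀] at hi
      simp [hb', this, hzero t i (by omega)]
    · simp only [hb', sum_add_distrib, sum_pi_single', mem_univ, if_true]
      linarith [hx.le t, hstock t]
    · have hi₀ : i ≤ i₀ := Fin.le_def.mpr (by simp [i₀]; omega)
      have hstock' : lowStock f b' i = lowStock f b i := funext fun t => by
        simp only [lowStock, hb', sum_add_distrib, sum_pi_single', mem_Iio, not_lt.mpr hi₀,
          if_false, add_zero]
      rw [hstock']
      rcases hi₀.lt_or_eq with hlt | heq
      · have : (fun t => b' t i) = fun t => b t i := funext fun t => by simp [hb', hlt.ne]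
        exact this ▸ hfill i (Fin.lt_def.mp hlt)
      · subst heq
        have : (fun t => b' t i₀) = x := funext fun t => by simp [hb', hzero t i₀ le_rfl]
        exact this ▸ hx

lemma exists_isGreedyMatching (hv : StrictMono v) (hvpos : ∀ i, 0 < v i) (hf : ∀ i, 0 ≤ f i) :
    ∃ b, IsGreedyMatching v f b :=
  let ⟨b, _, _, hb⟩ := exists_isGreedyMatching_prefix hv hvpos hf n
  ⟨b, fun i => hb i i.isLt⟩

namespace IsGreedyMatching

lemma nonneg (hb : IsGreedyMatching v f b) (t i : Fin n) : 0 ≤ b t i := (hb i).nonneg t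

lemma eq_zero_of_le (hb : IsGreedyMatching v f b) {t i : Fin n} (h : i ≤ t) : b t i = 0 :=
  (hb i).eq_zero_of_le t h

lemma sum_Iic_le (hb : IsGreedyMatching v f b) (t i : Fin n) : ∑ i' ∈ Iic i, b t i' ≤ f t / 2 := by
  have := (hb i).le t
  rw [lowStock] at this
  linarith [add_sum_Iio_eq_sum_Iic (f := fun i' => b t i') i]

lemma sum_le [NeZero n] (hb : IsGreedyMatching v f b) (t : Fin n) : ∑ i, b t i ≤ f t / 2 := by
  simpa [Iic_top] using hb.sum_Iic_le t ⊤

lemma sum_partnerRatio_mul_le (hb : IsGreedyMatching v f b) (i : Fin n) :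
    ∑ t, partnerRatio v i t * b t i ≤ f i / 2 :=
  (hb i).cost_le

lemma exists_pointer (hb : IsGreedyMatching v f b) (k : Fin n) :
    ∃ σ ≤ k, (∀ j < σ, ∑ i ∈ Iic k, b j i = f j / 2) ∧
      ∀ i, σ < i → i ≤ k → ∑ t, partnerRatio v i t * b t i = f i / 2 ∧ ∀ t, σ < t → b t i = 0 := by
  set S : Finset (Fin n) := {t | t < k ∧ ∑ i ∈ Iic k, b t i < f t / 2}
  have hsold : ∀ j < k, j ∉ S → ∑ i ∈ Iic k, b j i = f j / 2 := fun j hjk hj =>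
    (hb.sum_Iic_le j k).antisymm (not_lt.mp fun h => hj (by simp [S, hjk, h]))
  rcases S.eq_empty_or_nonempty with hS | hS
  · exact ⟨k, le_rfl, fun j hj => hsold j hj (by simp [hS]), fun i hi hik => absurd hik hi.not_ge⟩
  obtain ⟨σ, hσS, hσmin⟩ := S.exists_min_image id hS
  obtain ⟨hσk, hσ⟩ := by simpa [S] using hσS
  refine ⟨σ, hσk.le, fun j hj => hsold j (hj.trans hσk) fun hjS => (hσmin j hjS).not_gt hj,
    fun i hσi hik => ?_⟩
  have hlt : b σ i < lowStock f b i σ := by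
    have := (sum_le_sum_of_subset_of_nonneg (Iic_subset_Iic.mpr hik)
      fun i' _ _ => hb.nonneg σ i').trans_lt hσ
    rw [← add_sum_Iio_eq_sum_Iic] at this
    rw [lowStock]; linarith
  exact ⟨(hb i).cost_eq_of_lt hσi hlt, fun t hσt => (hb i).eq_zero_of_lt σ t hσt hlt⟩

lemma sum_Iio_le_of_sold (hb : IsGreedyMatching v f b) (hvpos : ∀ i, 0 < v i) {σ k : Fin n}
    (hsold : ∀ j < σ, ∑ i ∈ Iic k, b j i = f j / 2) :
    ∑ j ∈ Iio σ, v j * f j ≤ 2 * ∑ i ∈ Iic k, ∑ t, b t i * v t := by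
  calc ∑ j ∈ Iio σ, v j * f j = 2 * ∑ j ∈ Iio σ, ∑ i ∈ Iic k, b j i * v j := by
        rw [mul_sum]
        refine sum_congr rfl fun j hj => ?_
        rw [← sum_mul, hsold j (mem_Iio.mp hj)]
        ring
    _ ≤ 2 * ∑ j, ∑ i ∈ Iic k, b j i * v j :=
        mul_le_mul_of_nonneg_left (sum_le_sum_of_subset_of_nonneg (subset_univ _) fun j _ _ =>
          sum_nonneg fun i _ => mul_nonneg (hb.nonneg j i) (hvpos j).le) zero_le_two
    _ = 2 * ∑ i ∈ Iic k, ∑ t, b t i * v t := by rw [sum_comm]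

lemma sum_Icc_le_of_spent (hb : IsGreedyMatching v f b) (hv : StrictMono v)
    (hvpos : ∀ i, 0 < v i) {σ k : Fin n}
    (hspent : ∀ i, σ < i → i ≤ k →
      ∑ t, partnerRatio v i t * b t i = f i / 2 ∧ ∀ t, σ < t → b t i = 0) :
    ∑ i ∈ Icc σ k, (v i - v σ) * f i ≤ 2 * ∑ i ∈ Iic k, ∑ t, b t i * v t := by
  have hsurplus : ∀ i, 0 ≤ ∑ t, b t i * v t := fun i =>
    sum_nonneg fun t _ => mul_nonneg (hb.nonneg t i) (hvpos t).le
  rw [mul_sum]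
  refine (sum_le_sum fun i hi => ?_).trans
    (sum_le_sum_of_subset_of_nonneg Icc_subset_Iic_self fun i _ _ => by linarith [hsurplus i])
  obtain ⟨hσi, hik⟩ := mem_Icc.mp hi
  rcases hσi.eq_or_lt with rfl | hσi
  · simpa using hsurplus σ
  obtain ⟨hspend, hzero⟩ := hspent i hσi hik
  calc (v i - v σ) * f i = 2 * ∑ t, (v i - v σ) * partnerRatio v i t * b t i := by
        simp_rw [mul_assoc, ← mul_sum, hspend]
        ring
    _ ≤ 2 * ∑ t, b t i * v t := by
        refine mul_le_mul_of_nonneg_left (sum_le_sum fun t _ => ?_) zero_le_two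
        rcases le_or_gt t σ with htσ | hσt
        · nlinarith [sub_mul_partnerRatio_le hv hvpos htσ hσi, hb.nonneg t i]
        · simp [hzero t hσt]

lemma sum_Iic_mul_csZ_le_four_mul [NeZero n] (hb : IsGreedyMatching v f b) (hv : StrictMono v)
    (hvpos : ∀ i, 0 < v i) (hf : ∀ i, 0 < f i) (Z : Scheme n f) (k : Fin n) :
    ∑ i ∈ Iic k, f i * csZ v f Z i ≤ 4 * ∑ i ∈ Iic k, ∑ t, b t i * v t := by
  obtain ⟨σ, hσk, hsold, hspent⟩ := hb.exists_pointer k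
  linarith [sum_Iic_mul_csZ_le hv hvpos hf Z hσk, hb.sum_Iio_le_of_sold hvpos hsold,
    hb.sum_Icc_le_of_spent hv hvpos hspent]

end IsGreedyMatching

end GreedyMatching

section GreedyScheme

variable {n : ℕ} {v f : Fin n → ℝ} {b : Fin n → Fin n → ℝ}

/-- The weights sum to one because the signals and the prior do. -/
noncomputable def Scheme.ofFintype {ι : Type*} [Fintype ι] (hf : ∑ i, f i = 1)
    (sig : ι → Fin n → ℝ) (wt : ι → ℝ) (hsig : ∀ x, IsSignal (sig x)) (hwt : ∀ x, 0 ≤ wt x)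
    (hbayes : ∀ l, ∑ x, wt x * sig x l = f l) : Scheme n f where
  Q := Fintype.card ι
  sig q := sig ((Fintype.equivFin ι).symm q)
  wt q := wt ((Fintype.equivFin ι).symm q)
  sig_isSignal _ := hsig _
  wt_nonneg _ := hwt _
  wt_sum := by
    rw [Equiv.sum_comp (Fintype.equivFin ι).symm wt, ← hf]
    calc ∑ x, wt x = ∑ x, wt x * ∑ l, sig x l := by simp [(hsig _).2]
      _ = ∑ l, f l := by
        simp_rw [mul_sum]
        rw [sum_comm]
        exact sum_congr rfl fun l _ => hbayes l
  bayes l := by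
    rw [Equiv.sum_comp (Fintype.equivFin ι).symm (fun x => wt x * sig x l)]
    exact hbayes l

lemma Scheme.ofFintype_sum {ι : Type*} [Fintype ι] {hf : ∑ i, f i = 1}
    {sig : ι → Fin n → ℝ} {wt : ι → ℝ} {hsig : ∀ x, IsSignal (sig x)} {hwt : ∀ x, 0 ≤ wt x}
    {hbayes : ∀ l, ∑ x, wt x * sig x l = f l} (F : (Fin n → ℝ) → ℝ → ℝ) :
    ∑ q, F ((Scheme.ofFintype hf sig wt hsig hwt hbayes).sig q)
        ((Scheme.ofFintype hf sig wt hsig hwt hbayes).wt q) = ∑ x, F (sig x) (wt x) :=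
  Equiv.sum_comp (Fintype.equivFin ι).symm fun x => F (sig x) (wt x)

lemma sum_subtype_lt {ι M : Type*} [Fintype ι] [LinearOrder ι] [AddCommMonoid M]
    (F : ι → ι → M) (hF : ∀ t i, i ≤ t → F t i = 0) :
    ∑ p : {p : ι × ι // p.1 < p.2}, F p.1.1 p.1.2 = ∑ t, ∑ i, F t i := by
  rw [← Fintype.sum_prod_type', ← sum_subtype (univ.filter fun p : ι × ι => p.1 < p.2)
    (by simp) fun p => F p.1 p.2]
  exact sum_filter_of_ne fun p _ h => not_le.mp fun hle => h (hF _ _ hle)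

abbrev GreedyIndex (n : ℕ) : Type := Fin n ⊕ {p : Fin n × Fin n // p.1 < p.2}

noncomputable def greedySig (v : Fin n → ℝ) : GreedyIndex n → Fin n → ℝ
  | .inl j => Pi.single j 1
  | .inr p => eqRevSignal v p.1.1 p.1.2

/-- Each pair signal carries the matched masses `b t i` and `partnerRatio v i t * b t i`;
the singleton at `j` carries the rest of the prior mass at `j`. -/
noncomputable def greedyWt (v f : Fin n → ℝ) (b : Fin n → Fin n → ℝ) : GreedyIndex n → ℝ
  | .inl j => f j - ∑ i, b j i - ∑ t, partnerRatio v j t * b t j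
  | .inr p => b p.1.1 p.1.2 + partnerRatio v p.1.2 p.1.1 * b p.1.1 p.1.2

lemma smul_eqRevSignal (hv : StrictMono v) (hvpos : ∀ i, 0 < v i) {t i : Fin n} (hti : t < i)
    (c : ℝ) : (c + partnerRatio v i t * c) • eqRevSignal v t i
      = Pi.single t c + Pi.single i (partnerRatio v i t * c) := by
  have hd : v i - v t ≠ 0 := (sub_pos.mpr (hv hti)).ne'
  have hvi : v i ≠ 0 := (hvpos i).ne'
  ext l
  simp only [eqRevSignal, partnerRatio, Pi.smul_apply, Pi.add_apply, Pi.single_apply, smul_eq_mul]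
  split_ifs <;> field_simp <;> ring

lemma isSignal_greedySig (hv : StrictMono v) (hvpos : ∀ i, 0 < v i) :
    ∀ x, IsSignal (greedySig v x)
  | .inl j => isSignal_single j
  | .inr p => isSignal_eqRevSignal hv hvpos p.2

lemma greedySig_cases (hv : StrictMono v) :
    ∀ x, IsSingleton (greedySig v x) ∨ IsEqRevBinary v (greedySig v x)
  | .inl j => .inl ⟨j, funext fun l => Pi.single_apply j 1 l⟩
  | .inr p => .inr (isEqRevBinary_eqRevSignal hv p.2)

lemma greedyWt_mul_greedySig_inr (hv : StrictMono v) (hvpos : ∀ i, 0 < v i)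
    (p : {p : Fin n × Fin n // p.1 < p.2}) (l : Fin n) :
    greedyWt v f b (.inr p) * greedySig v (.inr p) l
      = (Pi.single p.1.1 (b p.1.1 p.1.2) : Fin n → ℝ) l
        + (Pi.single p.1.2 (partnerRatio v p.1.2 p.1.1 * b p.1.1 p.1.2) : Fin n → ℝ) l :=
  congrFun (smul_eqRevSignal hv hvpos p.2 _) l

lemma sum_greedyWt_mul_greedySig (hv : StrictMono v) (hvpos : ∀ i, 0 < v i)
    (hb : IsGreedyMatching v f b) (l : Fin n) :
    ∑ x, greedyWt v f b x * greedySig v x l = f l := by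
  rw [Fintype.sum_sum_type, sum_congr rfl fun p _ => greedyWt_mul_greedySig_inr hv hvpos p l,
    sum_subtype_lt (fun t i => (Pi.single t (b t i) : Fin n → ℝ) l
      + (Pi.single i (partnerRatio v i t * b t i) : Fin n → ℝ) l)
      fun t i h => by simp [hb.eq_zero_of_le h]]
  simp [greedyWt, greedySig, Pi.single_apply, sum_add_distrib]

variable [NeZero n]

lemma greedyWt_nonneg (hv : StrictMono v) (hvpos : ∀ i, 0 < v i) (hb : IsGreedyMatching v f b) :
    ∀ x, 0 ≤ greedyWt v f b x
  | .inl j => by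
    have := hb.sum_le j
    have := hb.sum_partnerRatio_mul_le j
    simp only [greedyWt]
    linarith
  | .inr p => add_nonneg (hb.nonneg _ _)
      (mul_nonneg (partnerRatio_pos hv hvpos p.2).le (hb.nonneg _ _))

noncomputable def greedyScheme (hv : StrictMono v) (hvpos : ∀ i, 0 < v i) (hsum : ∑ i, f i = 1)
    (hb : IsGreedyMatching v f b) : Scheme n f :=
  Scheme.ofFintype hsum (greedySig v) (greedyWt v f b) (isSignal_greedySig hv hvpos)
    (greedyWt_nonneg hv hvpos hb) (sum_greedyWt_mul_greedySig hv hvpos hb)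

lemma cs_single_mul_single (hv : StrictMono v) (hvpos : ∀ i, 0 < v i) (j l : Fin n) :
    cs v (Pi.single j 1) l * (Pi.single j 1 : Fin n → ℝ) l = 0 := by
  rcases eq_or_ne l j with rfl | h
  · simp [cs_eq_ite hv, priceIdx_single hv hvpos]
  · simp [h]

lemma cs_eqRevSignal (hv : StrictMono v) (hvpos : ∀ i, 0 < v i) {t i : Fin n} (hti : t < i)
    (l : Fin n) : cs v (eqRevSignal v t i) l = if t ≤ l then v l - v t else 0 := by
  rw [cs_eq_ite hv, priceIdx_eqRevSignal hv hvpos hti]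

lemma f_mul_csZ_greedyScheme (hv : StrictMono v) (hvpos : ∀ i, 0 < v i) (hf : ∀ i, 0 < f i)
    (hsum : ∑ i, f i = 1) (hb : IsGreedyMatching v f b) (l : Fin n) :
    f l * csZ v f (greedyScheme hv hvpos hsum hb) l = ∑ t, b t l * v t := by
  have hpair : ∀ p : {p : Fin n × Fin n // p.1 < p.2},
      greedyWt v f b (.inr p) * (cs v (greedySig v (.inr p)) l * greedySig v (.inr p) l)
        = if l = p.1.2 then b p.1.1 p.1.2 * v p.1.1 else 0 := fun ⟨(t, i), hti⟩ => by
    rw [mul_left_comm, greedyWt_mul_greedySig_inr hv hvpos]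
    simp only [greedySig, cs_eqRevSignal hv hvpos hti, Pi.single_apply]
    have hd : v i - v t ≠ 0 := (sub_pos.mpr (hv hti)).ne'
    rcases eq_or_ne l i with rfl | hli
    · simp only [if_pos hti.le, if_neg hti.ne', if_true, zero_add, partnerRatio]
      field_simp
    · rcases eq_or_ne l t with rfl | hlt <;> simp [*]
  rw [f_mul_csZ _ (hf l).ne', greedyScheme,
    Scheme.ofFintype_sum fun S w => w * (cs v S l * S l), Fintype.sum_sum_type,
    sum_congr rfl fun p _ => hpair p,
    sum_subtype_lt (fun t i => if l = i then b t i * v t else 0)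
      fun t i h => by simp [hb.eq_zero_of_le h]]
  simp [greedySig, cs_single_mul_single hv hvpos]

end GreedyScheme

section SurplusMass

variable {n : ℕ} {f : Fin n → ℝ}

/-- The length of `(0, m] ∩ (F(v_{i-1}), F(v_i)]`. -/
noncomputable def quantileLength (f : Fin n → ℝ) (m : ℝ) (i : Fin n) : ℝ :=
  min m (∑ j ∈ Iic i, f j) - min m (∑ j ∈ Iio i, f j)

lemma volume_real_Ioc_inter_Ioc (hf : ∀ i, 0 ≤ f i) (m : ℝ) (i : Fin n) :
    volume.real (Set.Ioc 0 m ∩ Set.Ioc (∑ j ∈ Iio i, f j) (∑ j ∈ Iic i, f j))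
      = quantileLength f m i := by
  have hA : 0 ≤ ∑ j ∈ Iio i, f j := sum_nonneg fun j _ => hf j
  have hAB := add_sum_Iio_eq_sum_Iic (f := f) i
  rw [Set.Ioc_inter_Ioc, Real.volume_real_Ioc, quantileLength, max_eq_right hA]
  rcases le_total m (∑ j ∈ Iio i, f j) with h | h
  · rw [min_eq_left h, min_eq_left (by linarith [hf i]), sub_self]
    exact max_eq_right (by linarith)
  · rw [min_eq_right h]
    exact max_eq_left (sub_nonneg.mpr (le_min h (by linarith [hf i])))

lemma quantileLength_nonneg (hf : ∀ i, 0 ≤ f i) (m : ℝ) (i : Fin n) :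
    0 ≤ quantileLength f m i :=
  volume_real_Ioc_inter_Ioc hf m i ▸ measureReal_nonneg

lemma PFV_smf [NeZero n] {v : Fin n → ℝ} (hf : ∀ i, 0 ≤ f i) (Z : Scheme n f) (m : ℝ) :
    PFV (smf v f Z) m = ∑ i, csZ v f Z i * quantileLength f m i := by
  have hsmf : smf v f Z = fun x => ∑ i, (Set.Ioc (∑ j ∈ Iio i, f j) (∑ j ∈ Iic i, f j)).indicator
      (fun _ => csZ v f Z i) x := funext fun x => by
    simp only [smf, filter_gt_eq_Iio, filter_ge_eq_Iic, Set.indicator_apply, Set.mem_Ioc]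
  rw [PFV, hsmf, integral_finsetSum _ fun i _ => (integrable_const _).indicator measurableSet_Ioc]
  refine sum_congr rfl fun i _ => ?_
  rw [setIntegral_indicator measurableSet_Ioc, setIntegral_const, smul_eq_mul,
    volume_real_Ioc_inter_Ioc hf, mul_comm]

lemma antitone_quantileLength_div (hf : ∀ i, 0 < f i) (m : ℝ) :
    Antitone fun i => quantileLength f m i / f i := by
  intro i j hij
  rcases hij.eq_or_lt with rfl | hlt
  · exact le_rfl
  have hle : ∑ l ∈ Iic i, f l ≤ ∑ l ∈ Iio j, f l :=
    sum_le_sum_of_subset_of_nonneg (fun l hl => mem_Iio.mpr ((mem_Iic.mp hl).trans_lt hlt))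
      fun l _ _ => (hf l).le
  simp only [quantileLength, ← add_sum_Iio_eq_sum_Iic (f := f)] at hle ⊢
  set A := ∑ l ∈ Iio i, f l
  set B := ∑ l ∈ Iio j, f l
  have hi := hf i
  have hj := hf j
  rcases le_total m B with h | h
  · rw [min_eq_left h, min_eq_left (by linarith : m ≤ f j + B), sub_self, zero_div]
    exact div_nonneg (sub_nonneg.mpr (min_le_min_left m (by linarith))) hi.le
  · rw [min_eq_right (by linarith : f i + A ≤ m), min_eq_right (by linarith : A ≤ m),
      add_sub_cancel_right, div_self hi.ne', div_le_one hj, min_eq_right h]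
    linarith [min_le_right m (f j + B)]

/-- Abel summation: on `(0, m]` the value `v_i` is counted with the weight
`quantileLength f m i / f i`, which is antitone in `i`. -/
lemma PFV_smf_le_of_forall_sum_Iic_le [NeZero n] {v : Fin n → ℝ} (hf : ∀ i, 0 < f i)
    (Z Z' : Scheme n f) (c m : ℝ)
    (h : ∀ k, ∑ i ∈ Iic k, f i * csZ v f Z' i ≤ c * ∑ i ∈ Iic k, f i * csZ v f Z i) :
    PFV (smf v f Z') m ≤ c * PFV (smf v f Z) m := by
  have habel := sum_mul_le_mul_sum_of_antitone (antitone_quantileLength_div hf m) univ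
    (x := fun i => f i * csZ v f Z' i - c * (f i * csZ v f Z i)) (c := 0)
    (fun k _ => by simpa [filter_ge_eq_Iic, sum_sub_distrib, ← mul_sum] using h k)
    fun i _ => div_nonneg (quantileLength_nonneg (fun i => (hf i).le) m i) (hf i).le
  rw [PFV_smf (fun i => (hf i).le), PFV_smf (fun i => (hf i).le), mul_sum, ← sub_nonpos,
    ← sum_sub_distrib]
  calc ∑ i, (csZ v f Z' i * quantileLength f m i - c * (csZ v f Z i * quantileLength f m i))
      = ∑ i, quantileLength f m i / f i * (f i * csZ v f Z' i - c * (f i * csZ v f Z i)) :=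
        sum_congr rfl fun i _ => by field_simp [(hf i).ne']
    _ ≤ 0 := by simpa using habel

end SurplusMass

theorem stmt10 (n : ℕ) [NeZero n] (v f : Fin n → ℝ)
    (hv : StrictMono v) (hvpos : ∀ i, 0 < v i)
    (hf : ∀ i, 0 < f i) (hsum : ∑ i, f i = 1) :
    ∃ Z : Scheme n f,
      (∀ q, IsSingleton (Z.sig q) ∨ IsEqRevBinary v (Z.sig q)) ∧
      ∀ Z' : Scheme n f, ∀ m : ℝ, 0 < m → m ≤ 1 →
        PFV (smf v f Z') m ≤ 4 * PFV (smf v f Z) m := by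
  obtain ⟨b, hb⟩ := exists_isGreedyMatching hv hvpos fun i => (hf i).le
  refine ⟨greedyScheme hv hvpos hsum hb, fun q => greedySig_cases hv _, fun Z' m _ _ => ?_⟩
  refine PFV_smf_le_of_forall_sum_Iic_le hf _ Z' 4 m fun k => ?_
  simp_rw [f_mul_csZ_greedyScheme hv hvpos hf hsum hb]
  exact hb.sum_Iic_mul_csZ_le_four_mul hv hvpos hf Z' k

end PD
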